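/- Let G be the unweighted 4-cycle and α = 2. Setting x_e = 1/2 on all four edges extends to a feasible fractional solution of the arc-based LP relaxation (AB) with K = E (sending half a unit of flow each way around the cycle for each terminal pair), giving objective value 2, whereas every feasible fractional solution of the path-based LP relaxation (PB) has objective value at least 3. Hence on this instance the LP relaxation of (AB) is strictly weaker than that of (PB). -/

import Mathlib

open scoped BigOperators

noncomputable section

variable {V : Type*}

/-- The weight of a walk: the sum of the (real) weights of its edges. -/
def walkWeight {G : SimpleGraph V} (w : Sym2 V → ℝ) {u v : V} (p : G.Walk u v) : ℝ :=
  (p.edges.map w).sum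

/-- `P_uv`: the set of `u`-`v` paths of weight at most the bound `B u v`. -/
def pathSet (G : SimpleGraph V) (w : Sym2 V → ℝ) (B : V → V → ℝ) (u v : V) :
    Set (G.Walk u v) := {p | p.IsPath ∧ walkWeight w p ≤ B u v}

/-- Feasibility for the LP relaxation of the path-based model (PB). -/
def PBFeasible (G : SimpleGraph V) (w : Sym2 V → ℝ) (K : Set (V × V)) (B : V → V → ℝ)
    (x : Sym2 V → ℝ) (y : ∀ u v : V, G.Walk u v → ℝ) : Prop :=
  (∀ e, 0 ≤ x e ∧ x e ≤ 1) ∧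
  (∀ (u v : V) (p : G.Walk u v), 0 ≤ y u v p ∧ y u v p ≤ 1) ∧
  (∀ uv ∈ K, 1 ≤ ∑ᶠ p ∈ pathSet G w B uv.1 uv.2, y uv.1 uv.2 p) ∧
  (∀ uv ∈ K, ∀ e : Sym2 V,
    ∑ᶠ p ∈ {p ∈ pathSet G w B uv.1 uv.2 | e ∈ p.edges}, y uv.1 uv.2 p ≤ x e)

/-- Feasibility for the LP relaxation of the arc-based multicommodity-flow model (AB). -/
def ABFeasible [Fintype V] [DecidableEq V] (G : SimpleGraph V) (w : Sym2 V → ℝ)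
    (K : Set (V × V)) (B : V → V → ℝ) (x : Sym2 V → ℝ) (f : V × V → V → V → ℝ) : Prop :=
  (∀ e, 0 ≤ x e ∧ x e ≤ 1) ∧
  (∀ uv i j, 0 ≤ f uv i j ∧ f uv i j ≤ 1) ∧
  (∀ uv ∈ K, ∀ i j : V, ¬ G.Adj i j → f uv i j = 0) ∧
  (∀ uv ∈ K, ∀ i : V,
    (∑ j, f uv i j) - (∑ j, f uv j i)
      = (if i = uv.1 then 1 else 0) - (if i = uv.2 then 1 else 0)) ∧
  (∀ uv ∈ K, ∀ i j : V, G.Adj i j → f uv i j + f uv j i ≤ x s(i, j)) ∧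
  (∀ uv ∈ K, ∑ i, ∑ j, w s(i, j) * f uv i j ≤ B uv.1 uv.2)

/-- The unweighted 4-cycle on `ZMod 4`. -/
def C4 : SimpleGraph (ZMod 4) := SimpleGraph.fromRel (fun i j => j = i + 1)

/-!
With unit weights and stretch bound 2, the only short path between the ends of an edge of a
triangle-free graph is the edge itself. So in (PB) the covering and capacity constraints of an
edge force `x_e ≥ 1`, and on `C4` the objective is at least 4. (AB) only bounds the *total*
weight of each flow: half a unit along the edge (weight 1) and half the long way round the cycle
(weight 3) costs exactly 2, and puts at most `1/2` on every edge.
-/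

open Finset

theorem walkWeight_const_one {G : SimpleGraph V} {u v : V} (p : G.Walk u v) :
    walkWeight (fun _ => (1 : ℝ)) p = p.length := by
  simp [walkWeight, List.map_const']

theorem SimpleGraph.Walk.mem_edges_of_length_le_two {G : SimpleGraph V} (hG : G.CliqueFree 3)
    {u v : V} (huv : G.Adj u v) (p : G.Walk u v) (hp : p.length ≤ 2) : s(u, v) ∈ p.edges := by
  classical
  match p, hp with
  | .nil, _ => exact absurd rfl huv.ne
  | .cons _ .nil, _ => simp
  | .cons hua (.cons hav .nil), _ =>
    exact absurd (G.is3Clique_triple_iff.mpr ⟨hua, huv, hav⟩) (hG _)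
  | .cons _ (.cons _ (.cons _ _)), hp => simp at hp

theorem PBFeasible.one_le_of_forall_mem_edges {G : SimpleGraph V} {w : Sym2 V → ℝ}
    {K : Set (V × V)} {B : V → V → ℝ} {x : Sym2 V → ℝ} {y : ∀ u v : V, G.Walk u v → ℝ}
    (h : PBFeasible G w K B x y) {uv : V × V} (huv : uv ∈ K) {e : Sym2 V}
    (he : ∀ p ∈ pathSet G w B uv.1 uv.2, e ∈ p.edges) : 1 ≤ x e := by
  obtain ⟨-, -, hcover, hcap⟩ := h
  calc 1 ≤ ∑ᶠ p ∈ pathSet G w B uv.1 uv.2, y uv.1 uv.2 p := hcover uv huv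
    _ = ∑ᶠ p ∈ {p ∈ pathSet G w B uv.1 uv.2 | e ∈ p.edges}, y uv.1 uv.2 p := by
      rw [Set.sep_eq_self_iff_mem_true.mpr he]
    _ ≤ x e := hcap uv huv e

theorem PBFeasible.one_le_of_cliqueFree_three {G : SimpleGraph V} {x : Sym2 V → ℝ}
    {y : ∀ u v : V, G.Walk u v → ℝ}
    (h : PBFeasible G (fun _ => 1) {p | G.Adj p.1 p.2} (fun _ _ => 2) x y)
    (hG : G.CliqueFree 3) {e : Sym2 V} (he : e ∈ G.edgeSet) : 1 ≤ x e := by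
  induction e using Sym2.ind with
  | _ u v =>
  refine h.one_le_of_forall_mem_edges (uv := (u, v)) he fun p hp => ?_
  have hw : (p.length : ℝ) ≤ 2 := walkWeight_const_one p ▸ hp.2
  exact p.mem_edges_of_length_le_two hG he (by exact_mod_cast hw)

def halfArcFlow [DecidableEq V] (A : V × V → Finset (V × V)) (uv : V × V) (i j : V) : ℝ :=
  if (i, j) ∈ A uv then 1 / 2 else 0

theorem ABFeasible_halfArcFlow [Fintype V] [DecidableEq V] {G : SimpleGraph V}
    {K : Set (V × V)} {B : V → V → ℝ} (A : V × V → Finset (V × V))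
    (hadj : ∀ uv ∈ K, ∀ i j, (i, j) ∈ A uv → G.Adj i j)
    (hanti : ∀ uv ∈ K, ∀ i j, (i, j) ∈ A uv → (j, i) ∉ A uv)
    (hbal : ∀ uv ∈ K, ∀ i, #{j | (i, j) ∈ A uv} + 2 * (if i = uv.2 then 1 else 0) =
      #{j | (j, i) ∈ A uv} + 2 * (if i = uv.1 then 1 else 0))
    (hcost : ∀ uv ∈ K, (#(A uv) : ℝ) ≤ 2 * B uv.1 uv.2) :
    ABFeasible G (fun _ => 1) K B (fun _ => 1 / 2) (halfArcFlow A) := by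
  have hsum : ∀ p : V → Prop, [DecidablePred p] →
      ∑ j, (if p j then (1 / 2 : ℝ) else 0) = #{j | p j} / 2 := by
    intro p _
    rw [sum_ite, sum_const, sum_const_zero, nsmul_eq_mul]
    ring
  refine ⟨fun _ => by norm_num, ?_, ?_, ?_, ?_, ?_⟩ <;> dsimp only [halfArcFlow]
  · intro uv i j
    split_ifs <;> norm_num
  · intro uv huv i j hij
    rw [if_neg (mt (hadj uv huv i j) hij)]
  · intro uv huv i
    have h := congrArg (Nat.cast (R := ℝ)) (hbal uv huv i)
    push_cast at h
    rw [hsum, hsum]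
    linarith
  · intro uv huv i j _
    by_cases hij : (i, j) ∈ A uv
    · simp [hij, hanti uv huv i j hij]
    · split_ifs <;> norm_num
  · intro uv huv
    simp only [one_mul]
    rw [← Fintype.sum_prod_type' (f := fun i j => if (i, j) ∈ A uv then (1 / 2 : ℝ) else 0),
      sum_ite_mem univ, univ_inter, sum_const, nsmul_eq_mul]
    linarith [hcost uv huv]

namespace C4

theorem adj_iff (i j : ZMod 4) : C4.Adj i j ↔ i ≠ j ∧ (j = i + 1 ∨ i = j + 1) := by
  simp [C4]

instance : DecidableRel C4.Adj := fun i j => decidable_of_iff _ (adj_iff i j).symm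

theorem cliqueFree_three : C4.CliqueFree 3 := by
  unfold SimpleGraph.CliqueFree
  decide

theorem edgeSet_eq :
    C4.edgeSet = ↑({s(0, 1), s(1, 2), s(2, 3), s(3, 0)} : Finset (Sym2 (ZMod 4))) := by
  ext e
  induction e using Sym2.ind with
  | _ a b =>
    rw [SimpleGraph.mem_edgeSet]
    revert a b
    decide

theorem finsum_edgeSet (g : Sym2 (ZMod 4) → ℝ) :
    ∑ᶠ e ∈ C4.edgeSet, g e = g s(0, 1) + g s(1, 2) + g s(2, 3) + g s(3, 0) := by
  rw [edgeSet_eq, finsum_mem_coe_finset, sum_insert (by decide), sum_insert (by decide),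
    sum_insert (by decide), sum_singleton]
  ring

/-- The arc `(u, v)` together with the long way `u → u - d → u - 2d → v` round the cycle,
where `d = v - u`. -/
def halfArcs (uv : ZMod 4 × ZMod 4) : Finset (ZMod 4 × ZMod 4) :=
  {ij | ij = uv ∨ (ij.1 ≠ uv.2 ∧ ij.2 = ij.1 - (uv.2 - uv.1))}

theorem card_halfArcs : ∀ uv : ZMod 4 × ZMod 4, C4.Adj uv.1 uv.2 → #(halfArcs uv) = 4 := by
  decide

theorem ABFeasible_halfArcFlow_halfArcs :
    ABFeasible C4 (fun _ => 1) {p | C4.Adj p.1 p.2} (fun _ _ => 2) (fun _ => 1 / 2)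
      (halfArcFlow halfArcs) := by
  refine ABFeasible_halfArcFlow halfArcs (by decide) (by decide) (by decide) fun uv huv => ?_
  rw [card_halfArcs uv huv]
  norm_num

end C4

/-- On the unweighted 4-cycle with `α = 2` and `K = E`: setting `x_e = 1/2` on every edge
extends to a feasible fractional (AB)-solution of objective value `2`, while every feasible
fractional (PB)-solution has objective value at least `3`. -/
theorem C4_AB_weaker_than_PB :
    (∃ (x : Sym2 (ZMod 4) → ℝ) (f : ZMod 4 × ZMod 4 → ZMod 4 → ZMod 4 → ℝ),
      ABFeasible C4 (fun _ => (1 : ℝ)) {p | C4.Adj p.1 p.2} (fun _ _ => (2 : ℝ)) x f ∧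
      (∀ e ∈ C4.edgeSet, x e = 1 / 2) ∧
      ∑ᶠ e ∈ C4.edgeSet, (1 : ℝ) * x e = 2) ∧
    (∀ (x : Sym2 (ZMod 4) → ℝ) (y : ∀ u v : ZMod 4, C4.Walk u v → ℝ),
      PBFeasible C4 (fun _ => (1 : ℝ)) {p | C4.Adj p.1 p.2} (fun _ _ => (2 : ℝ)) x y →
      3 ≤ ∑ᶠ e ∈ C4.edgeSet, (1 : ℝ) * x e) := by
  refine ⟨⟨fun _ => 1 / 2, halfArcFlow C4.halfArcs, C4.ABFeasible_halfArcFlow_halfArcs,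
    fun _ _ => rfl, ?_⟩, fun x y h => ?_⟩
  · rw [C4.finsum_edgeSet]
    norm_num
  · have hx : ∀ e ∈ C4.edgeSet, 1 ≤ x e := fun e he =>
      h.one_le_of_cliqueFree_three C4.cliqueFree_three he
    rw [C4.finsum_edgeSet]
    linarith [hx s(0, 1) (by decide), hx s(1, 2) (by decide), hx s(2, 3) (by decide),
      hx s(3, 0) (by decide)]

end
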